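/- Let d and r₂ be positive integers and k ∈ ℤ_{++}^{r₂} (with the convention k_{r₂+1} := 0). Then, in ℂ[X], the polynomial ∏_{1≤i≤j≤r₂+1}(X − d(i+j−2)/2)_{⌊(k_i+k_j)/2⌋} · ∏_{1≤i<j≤r₂+1}(X − 1/2 − d(i+j−2)/2)_{⌈(k_i+k_j)/2⌉} divides the polynomial (X)_{φ₂(k),d} · ∏_{1≤i<j≤r₂}(X − d(i+j−1)/2)_{⌊(k_i+k_j)/2⌋} · ∏_{1≤i≤j≤r₂}(X − 1/2 − d(i+j−1)/2)_{⌈(k_i+k_j)/2⌉}, where (X)_{φ₂(k),d} := ∏_{a=1}^{2r₂}(X − d(a−1)/2)_{φ₂(k)_a}. Equivalently, the rational function (λ)_{φ₂(k),d} · C₂^{d,2d}(λ,k) extends to a polynomial in λ. -/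

import Mathlib

/-!
Both halves of the denominator are matched injectively against factors of the numerator with
the same shift and at least the same length.  The half-integer factor indexed by `i < j ≤ r₂ + 1`
goes to `(i, j - 1)`, which is allowed because `k` is antitone.  Among the integer factors with
`i + j = s`, the one minimizing `⌊(k_i + k_j)/2⌋` is exactly `(X - d(s-2)/2)_{φ₂(k)_{s-1}}`;
the pairs to its left go to `(i, j - 1)` and those to its right to `(i - 1, j)`, both of sum
`s - 1` and hence of the same shift.  The corner `(r₂ + 1, r₂ + 1)` contributes `1`.
-/

open Polynomial Finset

/-- `(X - c)_m := ∏_{t=0}^{m-1} (X - c + t)` in `ℂ[X]`. -/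
noncomputable def pochPoly (c : ℂ) (m : ℕ) : Polynomial ℂ :=
  ∏ t ∈ Finset.range m, (Polynomial.X - Polynomial.C c + (t : Polynomial ℂ))

/-- `φ₂(k)_a := min{⌊(k_i + k_j)/2⌋ : 1 ≤ i ≤ j ≤ r₂+1, i+j = a+1}`. -/
noncomputable def phi2 (r₂ : ℕ) (k : ℕ → ℕ) (a : ℕ) : ℕ :=
  sInf {m : ℕ | ∃ i j : ℕ, 1 ≤ i ∧ i ≤ j ∧ j ≤ r₂ + 1 ∧ i + j = a + 1 ∧
    m = (k i + k j) / 2}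

/-- The denominator
`∏_{1≤i≤j≤r₂+1}(X − d(i+j−2)/2)_{⌊(k_i+k_j)/2⌋}·∏_{1≤i<j≤r₂+1}(X − 1/2 − d(i+j−2)/2)_{⌈(k_i+k_j)/2⌉}`
of `C₂^{d,2d}`. -/
noncomputable def denom2 (d r₂ : ℕ) (k : ℕ → ℕ) : Polynomial ℂ :=
  (∏ i ∈ Finset.Icc 1 (r₂ + 1), ∏ j ∈ Finset.Icc i (r₂ + 1),
    pochPoly ((d : ℂ) * ((i : ℂ) + (j : ℂ) - 2) / 2) ((k i + k j) / 2)) *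
  ∏ i ∈ Finset.Icc 1 (r₂ + 1), ∏ j ∈ Finset.Icc (i + 1) (r₂ + 1),
    pochPoly (1 / 2 + (d : ℂ) * ((i : ℂ) + (j : ℂ) - 2) / 2) ((k i + k j + 1) / 2)

/-- The numerator
`∏_{1≤i<j≤r₂}(X − d(i+j−1)/2)_{⌊(k_i+k_j)/2⌋}·∏_{1≤i≤j≤r₂}(X − 1/2 − d(i+j−1)/2)_{⌈(k_i+k_j)/2⌉}`
of `C₂^{d,2d}`. -/
noncomputable def numer2 (d r₂ : ℕ) (k : ℕ → ℕ) : Polynomial ℂ :=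
  (∏ i ∈ Finset.Icc 1 r₂, ∏ j ∈ Finset.Icc (i + 1) r₂,
    pochPoly ((d : ℂ) * ((i : ℂ) + (j : ℂ) - 1) / 2) ((k i + k j) / 2)) *
  ∏ i ∈ Finset.Icc 1 r₂, ∏ j ∈ Finset.Icc i r₂,
    pochPoly (1 / 2 + (d : ℂ) * ((i : ℂ) + (j : ℂ) - 1) / 2) ((k i + k j + 1) / 2)

/-- The polynomial `(X)_{φ₂(k),d} = ∏_{a=1}^{2r₂}(X − d(a−1)/2)_{φ₂(k)_a}`. -/
noncomputable def phiPoly2 (d r₂ : ℕ) (k : ℕ → ℕ) : Polynomial ℂ :=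
  ∏ a ∈ Finset.Icc 1 (2 * r₂),
    pochPoly ((d : ℂ) * ((a : ℂ) - 1) / 2) (phi2 r₂ k a)

theorem Finset.prod_dvd_prod_of_injOn {ι κ M : Type*} [CommMonoid M] {s : Finset ι}
    {t : Finset κ} {f : ι → M} {g : κ → M} (e : ι → κ) (he : Set.MapsTo e s t)
    (he' : Set.InjOn e s) (h : ∀ i ∈ s, f i ∣ g (e i)) :
    ∏ i ∈ s, f i ∣ ∏ j ∈ t, g j := by
  classical
  calc ∏ i ∈ s, f i ∣ ∏ i ∈ s, g (e i) := prod_dvd_prod_of_dvd _ _ h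
    _ = ∏ j ∈ s.image e, g j := (prod_image he').symm
    _ ∣ ∏ j ∈ t, g j := prod_dvd_prod_of_subset _ _ _ (image_subset_iff.2 he)

lemma pochPoly_zero (c : ℂ) : pochPoly c 0 = 1 := prod_range_zero _

lemma pochPoly_dvd_pochPoly (c : ℂ) {m m' : ℕ} (h : m ≤ m') : pochPoly c m ∣ pochPoly c m' :=
  prod_dvd_prod_of_subset _ _ _ (range_subset_range.2 h)

lemma antitoneOn_Icc_succ {r : ℕ} {k : ℕ → ℕ} (hk : ∀ i j, 1 ≤ i → i ≤ j → j ≤ r → k j ≤ k i)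
    (hk0 : k (r + 1) = 0) : AntitoneOn k (Set.Icc 1 (r + 1)) := by
  rintro i ⟨hi, -⟩ j ⟨-, hj⟩ hij
  rcases hj.lt_or_eq with hj | rfl
  · exact hk i j hi hij (by omega)
  · simp [hk0]

def pairsLe (n : ℕ) : Finset (Σ _ : ℕ, ℕ) := (Icc 1 n).sigma fun i => Icc i n

def pairsLt (n : ℕ) : Finset (Σ _ : ℕ, ℕ) := (Icc 1 n).sigma fun i => Icc (i + 1) n

lemma denom2_eq (d r : ℕ) (k : ℕ → ℕ) : denom2 d r k =
    (∏ p ∈ pairsLe (r + 1),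
      pochPoly ((d : ℂ) * ((p.1 : ℂ) + p.2 - 2) / 2) ((k p.1 + k p.2) / 2)) *
    ∏ p ∈ pairsLt (r + 1),
      pochPoly (1 / 2 + (d : ℂ) * ((p.1 : ℂ) + p.2 - 2) / 2) ((k p.1 + k p.2 + 1) / 2) := by
  simp only [denom2, pairsLe, pairsLt, prod_sigma]

lemma numer2_eq (d r : ℕ) (k : ℕ → ℕ) : numer2 d r k =
    (∏ p ∈ pairsLt r, pochPoly ((d : ℂ) * ((p.1 : ℂ) + p.2 - 1) / 2) ((k p.1 + k p.2) / 2)) *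
    ∏ p ∈ pairsLe r,
      pochPoly (1 / 2 + (d : ℂ) * ((p.1 : ℂ) + p.2 - 1) / 2) ((k p.1 + k p.2 + 1) / 2) := by
  simp only [numer2, pairsLe, pairsLt, prod_sigma]

lemma halfFactors_dvd (d r : ℕ) {k : ℕ → ℕ} (hk : AntitoneOn k (Set.Icc 1 (r + 1))) :
    ∏ p ∈ pairsLt (r + 1),
      pochPoly (1 / 2 + (d : ℂ) * ((p.1 : ℂ) + p.2 - 2) / 2) ((k p.1 + k p.2 + 1) / 2) ∣
    ∏ p ∈ pairsLe r,
      pochPoly (1 / 2 + (d : ℂ) * ((p.1 : ℂ) + p.2 - 1) / 2) ((k p.1 + k p.2 + 1) / 2) := by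
  refine prod_dvd_prod_of_injOn (fun p => ⟨p.1, p.2 - 1⟩) ?_ ?_ ?_
  · rintro ⟨i, j⟩ hp
    simp only [pairsLt, pairsLe, coe_sigma, Set.mem_sigma_iff, coe_Icc, Set.mem_Icc] at hp ⊢
    omega
  · rintro ⟨i, j⟩ hp ⟨i', j'⟩ hq h
    simp only [pairsLt, coe_sigma, Set.mem_sigma_iff, coe_Icc, Set.mem_Icc] at hp hq
    simp only [Sigma.mk.injEq, heq_eq_eq] at h ⊢
    omega
  · rintro ⟨i, j⟩ hp
    simp only [pairsLt, mem_sigma, mem_Icc] at hp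
    dsimp only
    have hj : ((j - 1 : ℕ) : ℂ) = j - 1 := by push_cast [show 1 ≤ j by omega]; ring
    rw [hj, show (i : ℂ) + (j - 1) - 1 = i + j - 2 by ring]
    refine pochPoly_dvd_pochPoly _ ?_
    gcongr
    exact hk ⟨by omega, by omega⟩ ⟨by omega, hp.2.2⟩ (by omega)

noncomputable def phi2Argmin (r : ℕ) (k : ℕ → ℕ) (s : ℕ) : ℕ :=
  sInf {i | 1 ≤ i ∧ i + i ≤ s ∧ s ≤ i + r + 1 ∧ (k i + k (s - i)) / 2 = phi2 r k (s - 1)}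

lemma phi2Argmin_spec (r : ℕ) (k : ℕ → ℕ) {i j : ℕ} (hi : 1 ≤ i) (hij : i ≤ j)
    (hj : j ≤ r + 1) :
    1 ≤ phi2Argmin r k (i + j) ∧ phi2Argmin r k (i + j) + phi2Argmin r k (i + j) ≤ i + j ∧
      i + j ≤ phi2Argmin r k (i + j) + r + 1 ∧
      (k (phi2Argmin r k (i + j)) + k (i + j - phi2Argmin r k (i + j))) / 2 =
        phi2 r k (i + j - 1) := by
  obtain ⟨i₀, j₀, hi₀, hij₀, hj₀, hs, hmin⟩ : phi2 r k (i + j - 1) ∈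
      {m | ∃ i' j', 1 ≤ i' ∧ i' ≤ j' ∧ j' ≤ r + 1 ∧ i' + j' = i + j - 1 + 1 ∧
        m = (k i' + k j') / 2} :=
    Nat.sInf_mem ⟨_, i, j, hi, hij, hj, by omega, rfl⟩
  have : phi2Argmin r k (i + j) ∈ {i' | 1 ≤ i' ∧ i' + i' ≤ i + j ∧ i + j ≤ i' + r + 1 ∧
      (k i' + k (i + j - i')) / 2 = phi2 r k (i + j - 1)} := by
    refine Nat.sInf_mem ⟨i₀, hi₀, by omega, by omega, ?_⟩
    rw [show i + j - i₀ = j₀ by omega, hmin]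
  exact this

noncomputable def matchPair (r : ℕ) (k : ℕ → ℕ) (p : Σ _ : ℕ, ℕ) : ℕ ⊕ (Σ _ : ℕ, ℕ) :=
  if p.1 = phi2Argmin r k (p.1 + p.2) then .inl (p.1 + p.2 - 1)
  else if p.1 < phi2Argmin r k (p.1 + p.2) then .inr ⟨p.1, p.2 - 1⟩
  else .inr ⟨p.1 - 1, p.2⟩

lemma matchPair_mapsTo (r : ℕ) (k : ℕ → ℕ) :
    Set.MapsTo (matchPair r k) ((pairsLe (r + 1)).erase ⟨r + 1, r + 1⟩)
      ((Icc 1 (2 * r)).disjSum (pairsLt r)) := by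
  rintro ⟨i, j⟩ hp
  simp only [mem_coe, mem_erase, pairsLe, mem_sigma, mem_Icc] at hp ⊢
  obtain ⟨hne, ⟨hi, -⟩, hij, hj⟩ := hp
  obtain ⟨h₁, h₂, h₃, -⟩ := phi2Argmin_spec r k hi hij hj
  have : ¬ (i = r + 1 ∧ j = r + 1) := by rintro ⟨rfl, rfl⟩; exact hne rfl
  simp only [matchPair]
  split_ifs <;> simp only [inl_mem_disjSum, inr_mem_disjSum, pairsLt, mem_sigma, mem_Icc] <;> omega

lemma matchPair_injOn (r : ℕ) (k : ℕ → ℕ) : Set.InjOn (matchPair r k) (pairsLe (r + 1)) := by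
  rintro ⟨i, j⟩ hp ⟨i', j'⟩ hq h
  simp only [pairsLe, coe_sigma, coe_Icc, Set.mem_sigma_iff, Set.mem_Icc] at hp hq
  have hs : i + j = i' + j' := by
    have := congrArg (Sum.elim id fun q : Σ _ : ℕ, ℕ => q.1 + q.2) h
    simp only [matchPair] at this
    split_ifs at this <;> simp only [Sum.elim_inl, Sum.elim_inr, id] at this <;> omega
  simp only [matchPair, ← hs] at h
  split_ifs at h <;> simp only [Sum.inr.injEq, Sigma.mk.injEq, heq_eq_eq] at h ⊢ <;> omega

noncomputable def phiNumerFactor (d r : ℕ) (k : ℕ → ℕ) : ℕ ⊕ (Σ _ : ℕ, ℕ) → ℂ[X] :=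
  Sum.elim (fun a => pochPoly ((d : ℂ) * ((a : ℂ) - 1) / 2) (phi2 r k a))
    fun q => pochPoly ((d : ℂ) * ((q.1 : ℂ) + q.2 - 1) / 2) ((k q.1 + k q.2) / 2)

lemma pochPoly_dvd_phiNumerFactor_matchPair (d r : ℕ) {k : ℕ → ℕ}
    (hk : AntitoneOn k (Set.Icc 1 (r + 1))) {p : Σ _ : ℕ, ℕ} (hp : p ∈ pairsLe (r + 1)) :
    pochPoly ((d : ℂ) * ((p.1 : ℂ) + p.2 - 2) / 2) ((k p.1 + k p.2) / 2) ∣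
      phiNumerFactor d r k (matchPair r k p) := by
  obtain ⟨i, j⟩ := p
  simp only [pairsLe, mem_sigma, mem_Icc] at hp
  obtain ⟨⟨hi, -⟩, hij, hj⟩ := hp
  obtain ⟨h₁, h₂, h₃, hmin⟩ := phi2Argmin_spec r k hi hij hj
  simp only [matchPair, phiNumerFactor]
  split_ifs with hcen hleft
  · have hc : (d : ℂ) * (((i + j - 1 : ℕ) : ℂ) - 1) / 2 = d * ((i : ℂ) + j - 2) / 2 := by
      push_cast [show 1 ≤ i + j by omega]; ring
    rw [Sum.elim_inl, hc, ← hmin, ← hcen, Nat.add_sub_cancel_left]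
  · have hc : (d : ℂ) * ((i : ℂ) + ((j - 1 : ℕ) : ℂ) - 1) / 2 = d * ((i : ℂ) + j - 2) / 2 := by
      push_cast [show 1 ≤ j by omega]; ring
    rw [Sum.elim_inr, hc]
    refine pochPoly_dvd_pochPoly _ ?_
    dsimp only
    gcongr
    exact hk ⟨by omega, by omega⟩ ⟨by omega, hj⟩ (by omega)
  · have hc : (d : ℂ) * (((i - 1 : ℕ) : ℂ) + j - 1) / 2 = d * ((i : ℂ) + j - 2) / 2 := by
      push_cast [show 1 ≤ i by omega]; ring
    rw [Sum.elim_inr, hc]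
    refine pochPoly_dvd_pochPoly _ ?_
    dsimp only
    gcongr
    exact hk ⟨by omega, by omega⟩ ⟨hi, by omega⟩ (by omega)

lemma phiPoly2_mul_prod_pairsLt_eq (d r : ℕ) (k : ℕ → ℕ) :
    phiPoly2 d r k *
      ∏ p ∈ pairsLt r, pochPoly ((d : ℂ) * ((p.1 : ℂ) + p.2 - 1) / 2) ((k p.1 + k p.2) / 2) =
    ∏ x ∈ (Icc 1 (2 * r)).disjSum (pairsLt r), phiNumerFactor d r k x := by
  rw [prod_disjSum]
  rfl

lemma integerFactors_dvd (d r : ℕ) {k : ℕ → ℕ} (hk : AntitoneOn k (Set.Icc 1 (r + 1)))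
    (hk0 : k (r + 1) = 0) :
    ∏ p ∈ pairsLe (r + 1),
        pochPoly ((d : ℂ) * ((p.1 : ℂ) + p.2 - 2) / 2) ((k p.1 + k p.2) / 2) ∣
      phiPoly2 d r k *
        ∏ p ∈ pairsLt r, pochPoly ((d : ℂ) * ((p.1 : ℂ) + p.2 - 1) / 2) ((k p.1 + k p.2) / 2) := by
  have hcorner : (⟨r + 1, r + 1⟩ : Σ _ : ℕ, ℕ) ∈ pairsLe (r + 1) := by simp [pairsLe]
  rw [phiPoly2_mul_prod_pairsLt_eq, ← prod_erase_mul _ _ hcorner]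
  simp only [hk0, Nat.add_zero, Nat.zero_div, pochPoly_zero, mul_one]
  exact prod_dvd_prod_of_injOn _ (matchPair_mapsTo r k)
    ((matchPair_injOn r k).mono (coe_subset.2 (erase_subset _ _)))
    fun p hp => pochPoly_dvd_phiNumerFactor_matchPair d r hk (mem_of_mem_erase hp)

theorem denom_dvd_phiPoly_mul_numer_simple₂_general (d r₂ : ℕ)
    (k : ℕ → ℕ) (hk : ∀ i j, 1 ≤ i → i ≤ j → j ≤ r₂ → k j ≤ k i)
    (hk0 : k (r₂ + 1) = 0) :
    denom2 d r₂ k ∣ phiPoly2 d r₂ k * numer2 d r₂ k := by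
  have hk' := antitoneOn_Icc_succ hk hk0
  rw [denom2_eq, numer2_eq, ← mul_assoc]
  exact mul_dvd_mul (integerFactors_dvd d r₂ hk' hk0) (halfFactors_dvd d r₂ hk')

/-- Theorem 6.2 (case ε₂ = 2, restricted): `(λ)_{φ₂(k),d}·C₂^{d,2d}(λ,k)` is a
polynomial in `λ`. -/
theorem denom_dvd_phiPoly_mul_numer_simple₂ (d r₂ : ℕ) (hd : 0 < d) (hr₂ : 0 < r₂)
    (k : ℕ → ℕ) (hk : ∀ i j, 1 ≤ i → i ≤ j → j ≤ r₂ → k j ≤ k i)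
    (hk0 : k (r₂ + 1) = 0) :
    denom2 d r₂ k ∣ phiPoly2 d r₂ k * numer2 d r₂ k :=
  denom_dvd_phiPoly_mul_numer_simple₂_general d r₂ k hk hk0
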